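/- arXiv:2601.14486 — 2 statements merged into one kernel-verified Lean document; each statement's English description precedes it below -/
import Mathlib

section
/- Let Φ be an N-function satisfying the doubling condition such that ∫₁^∞ Φ(t)/t³ dt < ∞. Let I_{n,k}, k = 1,…,2ⁿ, be the dyadic subarcs of the unit circle of length 2π·2^{-n} at generation n, and let φ : ∂𝔻 → ∂𝔻 be any homeomorphism. Then ∑_{n=1}^∞ ∑_{k=1}^{2ⁿ} Φ(|φ(I_{n,k})| · 2ⁿ) · 2^{-2n} < ∞, where |φ(I_{n,k})| denotes the arclength of the image arc. -/
/-!
Convexity and `Φ 0 = 0` make `Φ` superadditive on `[0, ∞)`. Since a monotone lift of a circle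
homeomorphism maps the `2ᴺ` dyadic arcs of generation `N` onto arcs of total length `2π`,
superadditivity bounds the generation-`N` sum by `Φ(2π · 2ᴺ) ≤ Φ(8 · 2ᴺ) ≤ C_D³ Φ(2ᴺ)`.
The series `∑ Φ(2ᴺ) 4⁻ᴺ` is dominated by `∫₁^∞ Φ(t)/t³ dt`, comparing each term with the
integral over the dyadic block `(2ᴺ, 2ᴺ⁺¹]`.
-/

open MeasureTheory

section Superadditive

variable {Φ : ℝ → ℝ}

lemma ConvexOn.map_mul_le_mul_map (hconv : ConvexOn ℝ (Set.Ici 0) Φ) (h0 : Φ 0 ≤ 0)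
    {t x : ℝ} (ht₀ : 0 ≤ t) (ht₁ : t ≤ 1) (hx : 0 ≤ x) : Φ (t * x) ≤ t * Φ x := by
  have h := hconv.2 (Set.mem_Ici.2 hx) (Set.mem_Ici.2 le_rfl) ht₀ (sub_nonneg.2 ht₁)
    (add_sub_cancel t 1)
  simp only [smul_eq_mul, mul_zero, add_zero] at h
  nlinarith

lemma ConvexOn.sum_map_le_map_sum (hconv : ConvexOn ℝ (Set.Ici 0) Φ) (h0 : Φ 0 = 0)
    {ι : Type*} (s : Finset ι) (f : ι → ℝ) (hf : ∀ i ∈ s, 0 ≤ f i) :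
    ∑ i ∈ s, Φ (f i) ≤ Φ (∑ i ∈ s, f i) := by
  set S := ∑ i ∈ s, f i
  have hS₀ : 0 ≤ S := Finset.sum_nonneg hf
  rcases hS₀.eq_or_lt with hS | hS
  · have hzero : ∀ i ∈ s, f i = 0 := (Finset.sum_eq_zero_iff_of_nonneg hf).1 hS.symm
    rw [← hS, h0]
    exact (Finset.sum_eq_zero fun i hi => by rw [hzero i hi, h0]).le
  calc ∑ i ∈ s, Φ (f i) = ∑ i ∈ s, Φ (f i / S * S) := by
        refine Finset.sum_congr rfl fun i _ => ?_
        rw [div_mul_cancel₀ _ hS.ne']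
    _ ≤ ∑ i ∈ s, f i / S * Φ S := Finset.sum_le_sum fun i hi =>
        hconv.map_mul_le_mul_map h0.le (div_nonneg (hf i hi) hS.le)
          (div_le_one_of_le₀ (Finset.single_le_sum hf hi) hS.le) hS.le
    _ = Φ S := by rw [← Finset.sum_mul, ← Finset.sum_div, div_self hS.ne', one_mul]

end Superadditive

lemma sum_range_abs_sub_of_monotone_or_antitone {u : ℕ → ℝ} (hu : Monotone u ∨ Antitone u)
    (N : ℕ) : ∑ k ∈ Finset.range N, |u (k + 1) - u k| = |u N - u 0| := by
  rcases hu with hu | hu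
  · rw [abs_of_nonneg (sub_nonneg.2 (hu (Nat.zero_le N))), ← Finset.sum_range_sub]
    exact Finset.sum_congr rfl fun k _ => abs_of_nonneg (sub_nonneg.2 (hu k.le_succ))
  · rw [abs_of_nonpos (sub_nonpos.2 (hu (Nat.zero_le N))), neg_sub, ← Finset.sum_range_sub']
    exact Finset.sum_congr rfl fun k _ => by
      rw [abs_of_nonpos (sub_nonpos.2 (hu k.le_succ)), neg_sub]

lemma sum_abs_sub_lift_dyadic {ψ : ℝ → ℝ} (hψm : StrictMono ψ ∨ StrictAnti ψ)
    (hper : (∀ θ, ψ (θ + 2 * Real.pi) = ψ θ + 2 * Real.pi) ∨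
            (∀ θ, ψ (θ + 2 * Real.pi) = ψ θ - 2 * Real.pi)) (N : ℕ) :
    ∑ k ∈ Finset.range (2 ^ N),
      |ψ (2 * Real.pi * ((k : ℝ) + 1) / 2 ^ N) - ψ (2 * Real.pi * (k : ℝ) / 2 ^ N)| =
      2 * Real.pi := by
  set u : ℕ → ℝ := fun k => ψ (2 * Real.pi * (k : ℝ) / 2 ^ N)
  have hgrid : Monotone fun k : ℕ => 2 * Real.pi * (k : ℝ) / 2 ^ N := fun j k hjk => by
    have := Real.pi_pos
    dsimp only
    gcongr
  have hu : Monotone u ∨ Antitone u := hψm.imp (fun h => h.monotone.comp hgrid)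
    (fun h => h.antitone.comp_monotone hgrid)
  have hend : |u (2 ^ N) - u 0| = 2 * Real.pi := by
    have hu_end : u (2 ^ N) = ψ (0 + 2 * Real.pi) := by
      simp only [u]; congr 1; push_cast; field_simp; ring
    have hu_start : u 0 = ψ 0 := by simp [u]
    rw [hu_end, hu_start]
    rcases hper with hp | hp <;> rw [hp 0] <;> simp [Real.pi_pos.le]
  simpa only [u, Nat.cast_succ] using
    (sum_range_abs_sub_of_monotone_or_antitone hu (2 ^ N)).trans hend

lemma map_two_pow_mul_le_of_doubling {Φ : ℝ → ℝ} {C : ℝ} (hC : 0 ≤ C) (hD : ∀ t, 0 ≤ t → Φ (2 * t) ≤ C * Φ t)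
    (m : ℕ) {t : ℝ} (ht : 0 ≤ t) : Φ (2 ^ m * t) ≤ C ^ m * Φ t := by
  induction m with
  | zero => simp
  | succ m ih =>
    calc Φ (2 ^ (m + 1) * t) = Φ (2 * (2 ^ m * t)) := by ring_nf
      _ ≤ C * Φ (2 ^ m * t) := hD _ (by positivity)
      _ ≤ C * (C ^ m * Φ t) := mul_le_mul_of_nonneg_left ih hC
      _ = C ^ (m + 1) * Φ t := by ring

section IntegralTest

variable {Φ : ℝ → ℝ}

lemma ofReal_mul_sub_le_lintegral_Ioc (hmono : MonotoneOn Φ (Set.Ici 0)) (hnn : ∀ t, 0 ≤ Φ t)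
    {a b : ℝ} (ha : 0 ≤ a) (hab : a ≤ b) :
    ENNReal.ofReal (Φ a / b ^ 3 * (b - a)) ≤
      ∫⁻ t in Set.Ioc a b, ENNReal.ofReal (Φ t / t ^ 3) := by
  have hb : 0 ≤ b := ha.trans hab
  have hlow :
      ∀ t ∈ Set.Ioc a b, ENNReal.ofReal (Φ a / b ^ 3) ≤ ENNReal.ofReal (Φ t / t ^ 3) := by
    rintro t ⟨hat, htb⟩
    have ht : 0 < t := ha.trans_lt hat
    gcongr ENNReal.ofReal ?_
    calc Φ a / b ^ 3 ≤ Φ t / b ^ 3 := by gcongr; exact hmono ha ht.le hat.le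
      _ ≤ Φ t / t ^ 3 := by gcongr; exact hnn t
  calc ENNReal.ofReal (Φ a / b ^ 3 * (b - a))
      = ENNReal.ofReal (Φ a / b ^ 3) * volume (Set.Ioc a b) := by
        rw [Real.volume_Ioc, ENNReal.ofReal_mul (div_nonneg (hnn a) (by positivity))]
    _ = ∫⁻ _ in Set.Ioc a b, ENNReal.ofReal (Φ a / b ^ 3) := (setLIntegral_const _ _).symm
    _ ≤ ∫⁻ t in Set.Ioc a b, ENNReal.ofReal (Φ t / t ^ 3) :=
        setLIntegral_mono_ae' measurableSet_Ioc (Filter.Eventually.of_forall hlow)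

lemma summable_map_two_pow_mul_of_lintegral_lt_top (hmono : MonotoneOn Φ (Set.Ici 0))
    (hnn : ∀ t, 0 ≤ Φ t)
    (hint : (∫⁻ t in Set.Ioi (1 : ℝ), ENNReal.ofReal (Φ t / t ^ 3)) < ⊤) :
    Summable fun n : ℕ => Φ (2 ^ n) * (2 : ℝ) ^ (-2 * (n : ℤ)) := by
  set F : ℝ → ENNReal := fun t => ENNReal.ofReal (Φ t / t ^ 3)
  have hg : ∀ n : ℕ, 0 ≤ Φ (2 ^ n) * (2 : ℝ) ^ (-2 * (n : ℤ)) := fun n => by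
    have := hnn (2 ^ n); positivity
  -- the block `(2ⁿ, 2ⁿ⁺¹]` has length `2ⁿ` and `Φ t / t³ ≥ Φ(2ⁿ) / 8ⁿ⁺¹` on it
  have hblock : ∀ n : ℕ, ENNReal.ofReal (Φ (2 ^ n) * (2 : ℝ) ^ (-2 * (n : ℤ))) ≤
      8 * ∫⁻ t in Set.Ioc (2 ^ n) (2 ^ (n + 1)), F t := fun n => by
    calc ENNReal.ofReal (Φ (2 ^ n) * (2 : ℝ) ^ (-2 * (n : ℤ)))
        = 8 * ENNReal.ofReal (Φ (2 ^ n) / (2 ^ (n + 1)) ^ 3 * (2 ^ (n + 1) - 2 ^ n)) := by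
          rw [← ENNReal.ofReal_ofNat, ← ENNReal.ofReal_mul (by norm_num)]
          congr 1
          rw [show (-2 * (n : ℤ)) = -((2 * n : ℕ) : ℤ) by push_cast; ring, zpow_neg, zpow_natCast]
          field_simp
          ring
      _ ≤ 8 * ∫⁻ t in Set.Ioc (2 ^ n) (2 ^ (n + 1)), F t := by
          gcongr
          exact ofReal_mul_sub_le_lintegral_Ioc hmono hnn (by positivity)
            (pow_le_pow_right₀ one_le_two n.le_succ)
  have hdisj :
      Pairwise (Function.onFun Disjoint fun n : ℕ => Set.Ioc ((2 : ℝ) ^ n) (2 ^ (n + 1))) := by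
    simpa only [Nat.succ_eq_succ] using
      (pow_right_mono₀ (one_le_two (α := ℝ))).pairwise_disjoint_on_Ioc_succ
  have htsum : ∑' n : ℕ, ENNReal.ofReal (Φ (2 ^ n) * (2 : ℝ) ^ (-2 * (n : ℤ))) ≠ ⊤ := by
    refine (lt_of_le_of_lt ?_ (ENNReal.mul_lt_top (ENNReal.ofNat_lt_top (n := 8)) hint)).ne
    calc ∑' n : ℕ, ENNReal.ofReal (Φ (2 ^ n) * (2 : ℝ) ^ (-2 * (n : ℤ)))
        ≤ ∑' n : ℕ, 8 * ∫⁻ t in Set.Ioc (2 ^ n) (2 ^ (n + 1)), F t :=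
          ENNReal.tsum_le_tsum hblock
      _ = 8 * ∫⁻ t in ⋃ n : ℕ, Set.Ioc ((2 : ℝ) ^ n) (2 ^ (n + 1)), F t := by
          rw [ENNReal.tsum_mul_left,
            lintegral_iUnion (fun _ => measurableSet_Ioc) hdisj]
      _ ≤ 8 * ∫⁻ t in Set.Ioi 1, F t := by
          gcongr
          refine Set.iUnion_subset fun n t ht => ?_
          exact (one_le_pow₀ one_le_two).trans_lt ht.1
  exact (ENNReal.summable_toReal htsum).congr fun n => ENNReal.toReal_ofReal (hg n)

end IntegralTest

lemma sum_map_dyadic_arcs_le {Φ : ℝ → ℝ} (hconv : ConvexOn ℝ (Set.Ici 0) Φ)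
    (hmono : MonotoneOn Φ (Set.Ici 0)) (h0 : Φ 0 = 0) {C : ℝ} (hC : 0 ≤ C)
    (hD : ∀ t, 0 ≤ t → Φ (2 * t) ≤ C * Φ t) {ψ : ℝ → ℝ} (hψm : StrictMono ψ ∨ StrictAnti ψ)
    (hper : (∀ θ, ψ (θ + 2 * Real.pi) = ψ θ + 2 * Real.pi) ∨
            (∀ θ, ψ (θ + 2 * Real.pi) = ψ θ - 2 * Real.pi)) (N : ℕ) :
    ∑ k ∈ Finset.range (2 ^ N),
      Φ (|ψ (2 * Real.pi * ((k : ℝ) + 1) / 2 ^ N) - ψ (2 * Real.pi * (k : ℝ) / 2 ^ N)| * 2 ^ N) ≤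
      C ^ 3 * Φ (2 ^ N) := by
  have hpi := Real.pi_pos
  calc ∑ k ∈ Finset.range (2 ^ N),
        Φ (|ψ (2 * Real.pi * ((k : ℝ) + 1) / 2 ^ N) - ψ (2 * Real.pi * (k : ℝ) / 2 ^ N)| * 2 ^ N)
      ≤ Φ (∑ k ∈ Finset.range (2 ^ N),
        |ψ (2 * Real.pi * ((k : ℝ) + 1) / 2 ^ N) - ψ (2 * Real.pi * (k : ℝ) / 2 ^ N)| * 2 ^ N) :=
        hconv.sum_map_le_map_sum h0 _ _ fun k _ => by positivity
    _ = Φ (2 * Real.pi * 2 ^ N) := by rw [← Finset.sum_mul, sum_abs_sub_lift_dyadic hψm hper]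
    _ ≤ Φ (2 ^ 3 * 2 ^ N) :=
        hmono (by positivity : (0 : ℝ) ≤ _) (by positivity : (0 : ℝ) ≤ _)
          (by nlinarith [Real.pi_le_four, pow_pos (two_pos (α := ℝ)) N])
    _ ≤ C ^ 3 * Φ (2 ^ N) := map_two_pow_mul_le_of_doubling hC hD 3 (by positivity)

theorem stmt5_general (Φ : ℝ → ℝ) (hconv : ConvexOn ℝ (Set.Ici (0:ℝ)) Φ)
    (hmono : MonotoneOn Φ (Set.Ici (0:ℝ))) (h0 : Φ 0 = 0) (hnn : ∀ t, 0 ≤ Φ t)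
    (C_D : ℝ) (hCD : 2 ≤ C_D) (hD : ∀ t, 0 ≤ t → Φ (2 * t) ≤ C_D * Φ t)
    (hint : (∫⁻ t in Set.Ioi (1 : ℝ), ENNReal.ofReal (Φ t / t ^ 3)) < ⊤)
    (ψ : ℝ → ℝ) (hψm : StrictMono ψ ∨ StrictAnti ψ)
    (hper : (∀ θ, ψ (θ + 2 * Real.pi) = ψ θ + 2 * Real.pi) ∨
            (∀ θ, ψ (θ + 2 * Real.pi) = ψ θ - 2 * Real.pi)) :
    Summable fun n : ℕ => ∑ k ∈ Finset.range (2 ^ (n + 1)),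
      Φ (|ψ (2 * Real.pi * ((k : ℝ) + 1) / 2 ^ (n + 1)) -
            ψ (2 * Real.pi * (k : ℝ) / 2 ^ (n + 1))| * 2 ^ (n + 1)) *
        (2 : ℝ) ^ (-2 * ((n : ℤ) + 1)) := by
  have hdyadic := summable_map_two_pow_mul_of_lintegral_lt_top hmono hnn hint
  refine Summable.of_nonneg_of_le (fun n => Finset.sum_nonneg fun k _ => ?_) (fun n => ?_)
    (((summable_nat_add_iff 1).2 hdyadic).mul_left (C_D ^ 3))
  · exact mul_nonneg (hnn _) (by positivity)
  · rw [← Finset.sum_mul, ← mul_assoc]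
    push_cast
    exact mul_le_mul_of_nonneg_right
      (sum_map_dyadic_arcs_le hconv hmono h0 (by linarith) hD hψm hper (n + 1)) (by positivity)

/-- Discrete Φ-Douglas condition for an arbitrary circle homeomorphism, under the
integrability condition `∫₁^∞ Φ(t)/t³ dt < ∞` for a doubling N-function `Φ`.
The circle homeomorphism `φ : ∂𝔻 → ∂𝔻` is encoded by a lift `ψ : ℝ → ℝ`
(continuous, strictly monotone, `ψ(θ+2π) = ψ(θ) ± 2π`), so that
`φ (circleMap 0 1 θ) = circleMap 0 1 (ψ θ)`; the arclength of the image of the dyadic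
arc `I_{n,k}` is `|ψ(2π(k+1)/2ⁿ) − ψ(2πk/2ⁿ)|`. -/
theorem stmt5 (Φ : ℝ → ℝ) (hconv : ConvexOn ℝ (Set.Ici (0:ℝ)) Φ)
    (hmono : MonotoneOn Φ (Set.Ici (0:ℝ))) (h0 : Φ 0 = 0) (hnn : ∀ t, 0 ≤ Φ t)
    (hlim0 : Filter.Tendsto (fun t => Φ t / t) (nhdsWithin 0 (Set.Ioi (0:ℝ))) (nhds 0))
    (hliminf : Filter.Tendsto (fun t => Φ t / t) Filter.atTop Filter.atTop)
    (C_D : ℝ) (hCD : 2 ≤ C_D) (hD : ∀ t, 0 ≤ t → Φ (2 * t) ≤ C_D * Φ t)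
    (hint : (∫⁻ t in Set.Ioi (1 : ℝ), ENNReal.ofReal (Φ t / t ^ 3)) < ⊤)
    (ψ : ℝ → ℝ) (hψc : Continuous ψ) (hψm : StrictMono ψ ∨ StrictAnti ψ)
    (hper : (∀ θ, ψ (θ + 2 * Real.pi) = ψ θ + 2 * Real.pi) ∨
            (∀ θ, ψ (θ + 2 * Real.pi) = ψ θ - 2 * Real.pi)) :
    Summable fun n : ℕ => ∑ k ∈ Finset.range (2 ^ (n + 1)),
      Φ (|ψ (2 * Real.pi * ((k : ℝ) + 1) / 2 ^ (n + 1)) -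
            ψ (2 * Real.pi * (k : ℝ) / 2 ^ (n + 1))| * 2 ^ (n + 1)) *
        (2 : ℝ) ^ (-2 * ((n : ℤ) + 1)) :=
  stmt5_general Φ hconv hmono h0 hnn C_D hCD hD hint ψ hψm hper
end

section
/- Every homeomorphism φ : ∂𝔻 → ∂𝔻 satisfies the p-Douglas condition ∫_{∂𝔻}∫_{∂𝔻} (|φ(ξ)−φ(η)|/|ξ−η|)^p |dξ||dη| < ∞ for every p ∈ (1, 2). -/
/-!
On the unit circle the chord is comparable to the arc: `2/π · |u| ≤ |e^{i(x+u)} - e^{ix}| ≤ |u|`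
for `|u| ≤ π`. Centring the inner integral at `x` by periodicity, the integrand is therefore
bounded by `(π/2 · |ψ (x + u) - ψ x| / |u|) ^ p` with `ψ` a monotone lift of degree one (after
replacing `ψ` by `-ψ` if needed). This difference quotient is weak-`L²`: for fixed `x` the set where
it exceeds `s` lies in an interval of length `(ψ (x + T/s) - ψ (x - T/s)) / s`, whose integral
over a period `T` is `2 T² / s²`. By the layer-cake formula a weak-`L²` function on a finite measure
space has a finite `p`-th moment for every `p < 2`, since `∫₁^∞ t ^ (p - 3) dt < ∞`.
-/

open MeasureTheory
open scoped ENNReal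
open Real Set Function

theorem lintegral_ofReal_rpow_lt_top_of_measure_lt_le {α : Type*} [MeasurableSpace α]
    {μ : Measure α} [IsFiniteMeasure μ] {f : α → ℝ} (hf_nonneg : 0 ≤ f) (hf : Measurable f)
    {p C : ℝ} (hp0 : 0 < p) (hp2 : p < 2)
    (hC : ∀ t, 1 < t → μ {a | t < f a} ≤ ENNReal.ofReal (C / t ^ 2)) :
    ∫⁻ a, ENNReal.ofReal (f a ^ p) ∂μ < ⊤ := by
  rw [lintegral_rpow_eq_lintegral_meas_lt_mul μ (ae_of_all _ hf_nonneg) hf.aemeasurable hp0,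
    ← Ioc_union_Ioi_eq_Ioi zero_le_one,
    lintegral_union measurableSet_Ioi (Ioc_disjoint_Ioi le_rfl)]
  refine ENNReal.mul_lt_top ENNReal.ofReal_lt_top (ENNReal.add_lt_top.2 ⟨?_, ?_⟩)
  · calc ∫⁻ t in Ioc 0 1, μ {a | t < f a} * ENNReal.ofReal (t ^ (p - 1))
        ≤ ∫⁻ t in Ioc 0 1, μ univ * ENNReal.ofReal (t ^ (p - 1)) :=
          lintegral_mono fun t => by gcongr; exact subset_univ _
      _ = μ univ * ∫⁻ t in Ioc 0 1, ENNReal.ofReal (t ^ (p - 1)) :=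
          lintegral_const_mul' _ _ (measure_ne_top μ univ)
      _ < ⊤ := ENNReal.mul_lt_top (measure_lt_top μ univ)
          (intervalIntegral.intervalIntegrable_rpow' (by linarith : -1 < p - 1)).1.lintegral_lt_top
  · calc ∫⁻ t in Ioi 1, μ {a | t < f a} * ENNReal.ofReal (t ^ (p - 1))
        ≤ ∫⁻ t in Ioi 1, ENNReal.ofReal (C * t ^ (p - 3)) := by
          refine setLIntegral_mono' measurableSet_Ioi fun t (ht : 1 < t) => ?_
          calc μ {a | t < f a} * ENNReal.ofReal (t ^ (p - 1))
              ≤ ENNReal.ofReal (C / t ^ 2) * ENNReal.ofReal (t ^ (p - 1)) := by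
                gcongr; exact hC t ht
            _ = ENNReal.ofReal (C * t ^ (p - 3)) := by
              rw [← ENNReal.ofReal_mul' (by positivity),
                show p - 3 = p - 1 - (2 : ℕ) by norm_num; ring, rpow_sub_natCast (by positivity)]
              ring_nf
      _ < ⊤ := ((integrableOn_Ioi_rpow_of_lt (by linarith) one_pos).const_mul C).lintegral_lt_top

theorem Function.Periodic.setLIntegral_Ioc_add_eq {f : ℝ → ℝ≥0∞} {T : ℝ} (hf : Periodic f T)
    (hT : 0 < T) (t s : ℝ) :
    ∫⁻ x in Ioc t (t + T), f x = ∫⁻ x in Ioc s (s + T), f x := by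
  have : Fact (0 < T) := ⟨hT⟩
  simp only [← hf.lift_coe]
  rw [AddCircle.lintegral_preimage T t, AddCircle.lintegral_preimage T s]

theorem setLIntegral_Ioc_comp_const_add (f : ℝ → ℝ≥0∞) (a b c : ℝ) :
    ∫⁻ u in Ioc (a - c) (b - c), f (c + u) = ∫⁻ y in Ioc a b, f y := by
  rw [← preimage_const_add_Ioc]
  exact (measurePreserving_add_left volume c).setLIntegral_comp_preimage_emb
    (measurableEmbedding_addLeft c) f _

theorem dist_circleMap_add (x u : ℝ) :
    dist (circleMap 0 1 x) (circleMap 0 1 (x + u)) = 2 * |Real.sin (u / 2)| := by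
  rw [dist_comm, Complex.dist_eq]
  have : circleMap 0 1 (x + u) - circleMap 0 1 x
      = Complex.exp (x * Complex.I) * (Complex.exp (Complex.I * u) - 1) := by
    simp only [circleMap, Complex.ofReal_one, one_mul, zero_add, Complex.ofReal_add, add_mul,
      Complex.exp_add, mul_comm Complex.I]
    ring
  rw [this, norm_mul, Complex.norm_exp_ofReal_mul_I, one_mul,
    Complex.norm_exp_I_mul_ofReal_sub_one, norm_mul, Real.norm_two, Real.norm_eq_abs]

theorem mul_abs_le_dist_circleMap_add (x : ℝ) {u : ℝ} (hu : |u| ≤ π) :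
    2 / π * |u| ≤ dist (circleMap 0 1 x) (circleMap 0 1 (x + u)) := by
  have := mul_abs_le_abs_sin (x := u / 2) (by rw [abs_div, abs_two]; linarith)
  rw [dist_circleMap_add, abs_div, abs_two] at *
  linarith

theorem dist_circleMap_le_abs_sub (a b : ℝ) :
    dist (circleMap 0 1 a) (circleMap 0 1 b) ≤ |a - b| := by
  simpa [Real.dist_eq] using (lipschitzWith_circleMap 0 1).dist_le_mul a b

theorem dist_circleMap_div_dist_circleMap_add_le (a b x : ℝ) {u : ℝ} (hu : |u| ≤ π) :
    dist (circleMap 0 1 a) (circleMap 0 1 b) / dist (circleMap 0 1 x) (circleMap 0 1 (x + u))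
      ≤ π / 2 * (|b - a| / |u|) := by
  rcases eq_or_ne u 0 with rfl | hu0
  · simp -- both sides are `0`, by division by zero
  have hlow := mul_abs_le_dist_circleMap_add x hu
  calc dist (circleMap 0 1 a) (circleMap 0 1 b) / dist (circleMap 0 1 x) (circleMap 0 1 (x + u))
      ≤ |b - a| / (2 / π * |u|) := by
        rw [← abs_sub_comm]
        gcongr
        exact dist_circleMap_le_abs_sub a b
    _ = π / 2 * (|b - a| / |u|) := by field_simp

namespace Monotone

variable {ψ : ℝ → ℝ} {T : ℝ}

theorem abs_sub_le_of_add_period (hψ : Monotone ψ) (hper : ∀ x, ψ (x + T) = ψ x + T)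
    {a b : ℝ} (hab : |a - b| ≤ T) : |ψ a - ψ b| ≤ T := by
  wlog hba : b ≤ a generalizing a b
  · rw [abs_sub_comm] at hab ⊢
    exact this hab (le_of_not_ge hba)
  rw [abs_of_nonneg (sub_nonneg.2 hba)] at hab
  rw [abs_of_nonneg (sub_nonneg.2 (hψ hba))]
  linarith [hψ (show a ≤ b + T by linarith), hper b]

/-- Since `|ψ (x + u) - ψ x| ≤ T`, the condition forces `|u| < T / s`; monotonicity then bounds
`s * |u|` by the increment of `ψ` over `[x, x + T / s]` or `[x - T / s, x]`. -/
theorem volume_lt_abs_sub_div_abs_inter_le (hψ : Monotone ψ) (hper : ∀ x, ψ (x + T) = ψ x + T)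
    (x : ℝ) {s : ℝ} (hs : 0 < s) :
    volume ({u | s < |ψ (x + u) - ψ x| / |u|} ∩ Icc (-T) T)
      ≤ ENNReal.ofReal ((ψ (x + T / s) - ψ (x - T / s)) / s) := by
  have hsub : {u | s < |ψ (x + u) - ψ x| / |u|} ∩ Icc (-T) T
      ⊆ Icc (-((ψ x - ψ (x - T / s)) / s)) ((ψ (x + T / s) - ψ x) / s) := by
    rintro u ⟨hu : s < _, huT⟩
    have hu0 : u ≠ 0 := by rintro rfl; simp at hu; linarith
    have hlt : s * |u| < |ψ (x + u) - ψ x| := by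
      rwa [lt_div_iff₀ (abs_pos.2 hu0)] at hu
    have hle : |ψ (x + u) - ψ x| ≤ T :=
      hψ.abs_sub_le_of_add_period hper (by simpa [abs_le] using huT)
    have hw : |u| ≤ T / s := by rw [le_div_iff₀ hs]; linarith
    rw [abs_le] at hw
    rcases le_or_gt 0 u with hu' | hu'
    · rw [abs_of_nonneg hu', abs_of_nonneg (sub_nonneg.2 (hψ (by linarith)))] at hlt
      have := hψ (show x + u ≤ x + T / s by linarith)
      constructor
      · have : 0 ≤ (ψ x - ψ (x - T / s)) / s :=
          div_nonneg (sub_nonneg.2 (hψ (by linarith))) hs.le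
        linarith
      · rw [le_div_iff₀ hs]; linarith
    · rw [abs_of_neg hu', abs_of_nonpos (sub_nonpos.2 (hψ (by linarith)))] at hlt
      have := hψ (show x - T / s ≤ x + u by linarith)
      constructor
      · rw [neg_le, le_div_iff₀ hs]; linarith
      · have : 0 ≤ (ψ (x + T / s) - ψ x) / s :=
          div_nonneg (sub_nonneg.2 (hψ (by linarith))) hs.le
        linarith
  calc volume _ ≤ volume (Icc (-((ψ x - ψ (x - T / s)) / s)) ((ψ (x + T / s) - ψ x) / s)) :=
        measure_mono hsub
    _ = ENNReal.ofReal ((ψ (x + T / s) - ψ (x - T / s)) / s) := by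
        rw [Real.volume_Icc]; ring_nf

theorem integral_comp_add_sub_comp_sub (hψ : Monotone ψ) (hper : ∀ x, ψ (x + T) = ψ x + T)
    (w : ℝ) : ∫ x in (0 : ℝ)..T, (ψ (x + w) - ψ (x - w)) = 2 * w * T := by
  set g : ℝ → ℝ := fun x => ψ x - x
  have hg : Periodic g T := fun x => by simp only [g, hper]; ring
  have hgi : ∀ c, IntervalIntegrable (fun x => g (x + c)) volume 0 T := fun c =>
    (hψ.comp (monotone_id.add_const c)).intervalIntegrable.sub
      ((continuous_add_const c).intervalIntegrable 0 T)
  have hshift : ∀ c, ∫ x in (0 : ℝ)..T, g (x + c) = ∫ x in (0 : ℝ)..T, g x := fun c => by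
    rw [intervalIntegral.integral_comp_add_right, zero_add, add_comm T c,
      hg.intervalIntegral_add_eq c 0, zero_add]
  calc ∫ x in (0 : ℝ)..T, (ψ (x + w) - ψ (x - w))
      = ∫ x in (0 : ℝ)..T, (g (x + w) - g (x + -w) + 2 * w) := by
        congr 1; ext x; simp only [g, ← sub_eq_add_neg]; ring
    _ = 2 * w * T := by
        rw [intervalIntegral.integral_add ((hgi w).sub (hgi (-w))) intervalIntegrable_const,
          intervalIntegral.integral_sub (hgi w) (hgi (-w)), hshift, hshift,
          intervalIntegral.integral_const, smul_eq_mul]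
        ring

theorem measurable_abs_sub_div_abs (hψ : Monotone ψ) :
    Measurable fun z : ℝ × ℝ => |ψ (z.1 + z.2) - ψ z.1| / |z.2| := by
  have := hψ.measurable
  fun_prop

theorem prod_measure_lt_abs_sub_div_abs_le (hψ : Monotone ψ)
    (hper : ∀ x, ψ (x + T) = ψ x + T) (hT : 0 ≤ T) {s : ℝ} (hs : 0 < s) :
    ((volume.restrict (Ioc 0 T)).prod (volume.restrict (Icc (-T) T)))
        {z : ℝ × ℝ | s < |ψ (z.1 + z.2) - ψ z.1| / |z.2|}
      ≤ ENNReal.ofReal (2 * T ^ 2 / s ^ 2) := by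
  have hint : IntegrableOn (fun x => (ψ (x + T / s) - ψ (x - T / s)) / s) (Ioc 0 T) :=
    (((hψ.comp (monotone_id.add_const _)).intervalIntegrable.sub
      (hψ.comp (monotone_id.add_const _)).intervalIntegrable).div_const s).1
  have hw : 0 ≤ T / s := div_nonneg hT hs.le
  rw [Measure.prod_apply (measurableSet_lt measurable_const hψ.measurable_abs_sub_div_abs)]
  calc ∫⁻ x in Ioc 0 T, volume.restrict (Icc (-T) T)
        (Prod.mk x ⁻¹' {z : ℝ × ℝ | s < |ψ (z.1 + z.2) - ψ z.1| / |z.2|})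
      ≤ ∫⁻ x in Ioc 0 T, ENNReal.ofReal ((ψ (x + T / s) - ψ (x - T / s)) / s) :=
        lintegral_mono fun x => by
          rw [Measure.restrict_apply' measurableSet_Icc]
          exact hψ.volume_lt_abs_sub_div_abs_inter_le hper x hs
    _ = ENNReal.ofReal (∫ x in (0 : ℝ)..T, (ψ (x + T / s) - ψ (x - T / s)) / s) := by
        rw [intervalIntegral.integral_of_le hT, ofReal_integral_eq_lintegral_ofReal hint
          (ae_of_all _ fun x => div_nonneg (sub_nonneg.2 (hψ (by linarith))) hs.le)]
    _ = ENNReal.ofReal (2 * T ^ 2 / s ^ 2) := by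
        rw [intervalIntegral.integral_div, hψ.integral_comp_add_sub_comp_sub hper]
        congr 1
        field_simp

theorem lintegral_lintegral_abs_sub_div_abs_rpow_lt_top (hψ : Monotone ψ)
    (hper : ∀ x, ψ (x + T) = ψ x + T) (hT : 0 ≤ T) {p : ℝ} (hp0 : 0 < p) (hp2 : p < 2) :
    ∫⁻ x in Ioc 0 T, ∫⁻ u in Icc (-T) T, ENNReal.ofReal ((|ψ (x + u) - ψ x| / |u|) ^ p) < ⊤ := by
  have hmeas := hψ.measurable_abs_sub_div_abs
  rw [← lintegral_prod (fun z : ℝ × ℝ => ENNReal.ofReal ((|ψ (z.1 + z.2) - ψ z.1| / |z.2|) ^ p))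
    (hmeas.pow_const p).ennreal_ofReal.aemeasurable]
  exact lintegral_ofReal_rpow_lt_top_of_measure_lt_le (C := 2 * T ^ 2) (fun z => by positivity)
    hmeas hp0 hp2 fun t ht => hψ.prod_measure_lt_abs_sub_div_abs_le hper hT (by linarith)

end Monotone

theorem Antitone.lintegral_lintegral_abs_sub_div_abs_rpow_lt_top {ψ : ℝ → ℝ} {T : ℝ}
    (hψ : Antitone ψ) (hper : ∀ x, ψ (x + T) = ψ x - T) (hT : 0 ≤ T) {p : ℝ} (hp0 : 0 < p)
    (hp2 : p < 2) :
    ∫⁻ x in Ioc 0 T, ∫⁻ u in Icc (-T) T, ENNReal.ofReal ((|ψ (x + u) - ψ x| / |u|) ^ p) < ⊤ := by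
  simpa only [Pi.neg_apply, ← neg_sub', abs_neg] using
    hψ.neg.lintegral_lintegral_abs_sub_div_abs_rpow_lt_top (fun x => by simp [hper]; ring)
      hT hp0 hp2

theorem setLIntegral_rpow_dist_circleMap_div_le {ψ : ℝ → ℝ}
    (hψ : ∀ θ, circleMap 0 1 (ψ (θ + 2 * π)) = circleMap 0 1 (ψ θ)) {p : ℝ} (hp : 0 ≤ p)
    (x : ℝ) :
    ∫⁻ y in Ioo 0 (2 * π), ENNReal.ofReal ((dist (circleMap 0 1 (ψ x)) (circleMap 0 1 (ψ y)) /
        dist (circleMap 0 1 x) (circleMap 0 1 y)) ^ p)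
      ≤ ENNReal.ofReal ((π / 2) ^ p) *
        ∫⁻ u in Icc (-(2 * π)) (2 * π), ENNReal.ofReal ((|ψ (x + u) - ψ x| / |u|) ^ p) := by
  set G : ℝ → ℝ≥0∞ := fun y => ENNReal.ofReal ((dist (circleMap 0 1 (ψ x))
    (circleMap 0 1 (ψ y)) / dist (circleMap 0 1 x) (circleMap 0 1 y)) ^ p)
  have hG : Periodic G (2 * π) := fun y => by simp only [G, hψ, periodic_circleMap 0 1 y]
  calc ∫⁻ y in Ioo 0 (2 * π), G y
      ≤ ∫⁻ y in Ioc 0 (0 + 2 * π), G y :=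
        lintegral_mono_set (by rw [zero_add]; exact Ioo_subset_Ioc_self)
    _ = ∫⁻ y in Ioc (x - π) (x - π + 2 * π), G y := hG.setLIntegral_Ioc_add_eq two_pi_pos _ _
    _ = ∫⁻ u in Ioc (-π) π, G (x + u) := by
        rw [← setLIntegral_Ioc_comp_const_add G _ _ x]; ring_nf
    _ ≤ ∫⁻ u in Ioc (-π) π,
          ENNReal.ofReal ((π / 2) ^ p) * ENNReal.ofReal ((|ψ (x + u) - ψ x| / |u|) ^ p) := by
        refine setLIntegral_mono' measurableSet_Ioc fun u hu => ?_
        rw [← ENNReal.ofReal_mul (by positivity), ← mul_rpow (by positivity) (by positivity)]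
        exact ENNReal.ofReal_le_ofReal (rpow_le_rpow (by positivity)
          (dist_circleMap_div_dist_circleMap_add_le _ _ x (abs_le.2 ⟨hu.1.le, hu.2⟩)) hp)
    _ ≤ ∫⁻ u in Icc (-(2 * π)) (2 * π),
          ENNReal.ofReal ((π / 2) ^ p) * ENNReal.ofReal ((|ψ (x + u) - ψ x| / |u|) ^ p) :=
        lintegral_mono_set (Ioc_subset_Icc_self.trans (Icc_subset_Icc (by linarith [pi_pos])
          (by linarith [pi_pos])))
    _ = _ := lintegral_const_mul' _ _ ENNReal.ofReal_ne_top

theorem stmt19_general (p : ℝ) (hp1 : 1 < p) (hp2 : p < 2)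
    (ψ : ℝ → ℝ) (hψm : StrictMono ψ ∨ StrictAnti ψ)
    (hper : (∀ θ, ψ (θ + 2 * Real.pi) = ψ θ + 2 * Real.pi) ∨
            (∀ θ, ψ (θ + 2 * Real.pi) = ψ θ - 2 * Real.pi)) :
    (∫⁻ θ₁ in Set.Ioo (0:ℝ) (2 * Real.pi), ∫⁻ θ₂ in Set.Ioo (0:ℝ) (2 * Real.pi),
        ENNReal.ofReal ((dist (circleMap 0 1 (ψ θ₁)) (circleMap 0 1 (ψ θ₂)) /
          dist (circleMap 0 1 θ₁) (circleMap 0 1 θ₂)) ^ p)) < ⊤ := by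
  have hcirc : ∀ θ, circleMap 0 1 (ψ (θ + 2 * π)) = circleMap 0 1 (ψ θ) := by
    rcases hper with h | h <;> intro θ <;> rw [h θ]
    exacts [periodic_circleMap 0 1 (ψ θ), (periodic_circleMap 0 1).sub_eq (ψ θ)]
  have hline : ∫⁻ x in Ioc 0 (2 * π), ∫⁻ u in Icc (-(2 * π)) (2 * π),
      ENNReal.ofReal ((|ψ (x + u) - ψ x| / |u|) ^ p) < ⊤ := by
    have h2π := two_pi_pos
    rcases hψm with hψ | hψ <;> rcases hper with h | h
    · exact hψ.monotone.lintegral_lintegral_abs_sub_div_abs_rpow_lt_top h h2π.le (by linarith) hp2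
    · linarith [hψ (lt_add_of_pos_right 0 h2π), h 0]
    · linarith [hψ (lt_add_of_pos_right 0 h2π), h 0]
    · exact hψ.antitone.lintegral_lintegral_abs_sub_div_abs_rpow_lt_top h h2π.le (by linarith) hp2
  calc _ ≤ ∫⁻ x in Ioc 0 (2 * π), ENNReal.ofReal ((π / 2) ^ p) *
          ∫⁻ u in Icc (-(2 * π)) (2 * π), ENNReal.ofReal ((|ψ (x + u) - ψ x| / |u|) ^ p) :=
        (lintegral_mono_set Ioo_subset_Ioc_self).trans
          (lintegral_mono fun x => setLIntegral_rpow_dist_circleMap_div_le hcirc (by linarith) x)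
    _ = ENNReal.ofReal ((π / 2) ^ p) * ∫⁻ x in Ioc 0 (2 * π), ∫⁻ u in Icc (-(2 * π)) (2 * π),
          ENNReal.ofReal ((|ψ (x + u) - ψ x| / |u|) ^ p) :=
        lintegral_const_mul' _ _ ENNReal.ofReal_ne_top
    _ < ⊤ := ENNReal.mul_lt_top ENNReal.ofReal_lt_top hline

/-- Every circle homeomorphism satisfies the p-Douglas condition for `1 < p < 2`.
The homeomorphism `φ : ∂𝔻 → ∂𝔻` is encoded by a continuous strictly monotone lift
`ψ : ℝ → ℝ` with `ψ(θ+2π) = ψ(θ) ± 2π`, so that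
`φ (circleMap 0 1 θ) = circleMap 0 1 (ψ θ)`. -/
theorem stmt19 (p : ℝ) (hp1 : 1 < p) (hp2 : p < 2)
    (ψ : ℝ → ℝ) (hψc : Continuous ψ) (hψm : StrictMono ψ ∨ StrictAnti ψ)
    (hper : (∀ θ, ψ (θ + 2 * Real.pi) = ψ θ + 2 * Real.pi) ∨
            (∀ θ, ψ (θ + 2 * Real.pi) = ψ θ - 2 * Real.pi)) :
    (∫⁻ θ₁ in Set.Ioo (0:ℝ) (2 * Real.pi), ∫⁻ θ₂ in Set.Ioo (0:ℝ) (2 * Real.pi),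
        ENNReal.ofReal ((dist (circleMap 0 1 (ψ θ₁)) (circleMap 0 1 (ψ θ₂)) /
          dist (circleMap 0 1 θ₁) (circleMap 0 1 θ₂)) ^ p)) < ⊤ :=
  stmt19_general p hp1 hp2 ψ hψm hper
end
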